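/- arXiv:1912.10258 — 2 statements merged into one kernel-verified Lean document; each statement's English description precedes it below -/
import Mathlib

section
/- Let A be an m×n real matrix with restricted isometry constants δ_q, and let k be an odd positive integer. Then for every 2k-sparse vector z ∈ ℝⁿ one has ‖Az‖₂² ≥ (1 − δ_{k+1} − 2δ_k)‖z‖₂². -/
open Finset

noncomputable def nsq {ι : Type*} [Fintype ι] (x : ι → ℝ) : ℝ := ∑ i, (x i) ^ 2

noncomputable def n2 {ι : Type*} [Fintype ι] (x : ι → ℝ) : ℝ := Real.sqrt (nsq x)

noncomputable def supp {n : ℕ} (x : Fin n → ℝ) : Finset (Fin n) :=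
  Finset.univ.filter (fun i => x i ≠ 0)

def Sparse {n : ℕ} (k : ℕ) (x : Fin n → ℝ) : Prop := (supp x).card ≤ k

def restr {n : ℕ} (x : Fin n → ℝ) (T : Finset (Fin n)) : Fin n → ℝ :=
  fun i => if i ∈ T then x i else 0

def SatRIP {m n : ℕ} (A : Matrix (Fin m) (Fin n) ℝ) (q : ℕ) (δ : ℝ) : Prop :=
  ∀ z : Fin n → ℝ, Sparse q z →
    (1 - δ) * nsq z ≤ nsq (A.mulVec z) ∧ nsq (A.mulVec z) ≤ (1 + δ) * nsq z

/-- `δ` is the `q`-th order restricted isometry constant of `A`: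
the smallest `δ' ≥ 0` such that `(1-δ')‖z‖² ≤ ‖Az‖² ≤ (1+δ')‖z‖²` for all `q`-sparse `z`. -/
def IsRIC {m n : ℕ} (A : Matrix (Fin m) (Fin n) ℝ) (q : ℕ) (δ : ℝ) : Prop :=
  IsLeast {δ' : ℝ | 0 ≤ δ' ∧ SatRIP A q δ'} δ

/-- membership in `W^k`: binary vectors with exactly `k` entries equal to 1. -/
def InW {n : ℕ} (k : ℕ) (w : Fin n → ℝ) : Prop :=
  (∀ i, w i = 0 ∨ w i = 1) ∧ (Finset.univ.filter (fun i => w i = 1)).card = k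

/-- membership in the polytope `P^k`. -/
def InP {n : ℕ} (k : ℕ) (w : Fin n → ℝ) : Prop :=
  (∑ i, w i) = (k : ℝ) ∧ ∀ i, 0 ≤ w i ∧ w i ≤ 1

/-- `S` is an index set of the `k` largest absolute entries of `x`. -/
def IsTopK {n : ℕ} (x : Fin n → ℝ) (k : ℕ) (S : Finset (Fin n)) : Prop :=
  S.card = k ∧ ∀ i ∈ S, ∀ j ∉ S, |x j| ≤ |x i|

/-- `d` is a hard thresholding `H_k(z)` of `z`. -/
def IsHT {n : ℕ} (k : ℕ) (z d : Fin n → ℝ) : Prop :=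
  Sparse k d ∧ ∀ d' : Fin n → ℝ, Sparse k d' → n2 (z - d) ≤ n2 (z - d')

/-- `w 0, …, w (ω-1)` are successive compression minimizers at `x^p` (with `u^p = up`). -/
def SCM {m n : ℕ} (A : Matrix (Fin m) (Fin n) ℝ) (y : Fin m → ℝ) (k ω : ℕ)
    (up : Fin n → ℝ) (w : ℕ → Fin n → ℝ) : Prop :=
  ∀ j < ω, InP k (w j) ∧ ∀ v : Fin n → ℝ, InP k v →
    n2 (y - A.mulVec (up * (∏ l ∈ Finset.range j, w l) * w j)) ≤
    n2 (y - A.mulVec (up * (∏ l ∈ Finset.range j, w l) * v))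

/-- the `ℓ∞` norm of `x` restricted to `T` (zero if `T` is empty). -/
noncomputable def linfT {n : ℕ} (x : Fin n → ℝ) (T : Finset (Fin n)) : ℝ :=
  if h : T.Nonempty then T.sup' h (fun j => |x j|) else 0

/-! Split the support of `z` into `S` with `|S| ≤ k + 1` and `T` with `|T| ≤ k - 1`, and write
`x`, `y` for the restrictions of `z` to them, so that `‖Az‖² = ‖Ax‖² + 2⟪Ax, Ay⟫ + ‖Ay‖²`.
Both `x` and `y` are `(k + 1)`-sparse, which accounts for `1 - δ_{k+1}`. For the cross term,
halve `S` into two blocks of size `≤ (k + 1) / 2` and `T` into two of size `≤ (k - 1) / 2`; as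
`k` is odd, each block of `S` together with each block of `T` is `k`-sparse, and for disjointly
supported `u`, `v` the RIP applied to `u ± v` gives `⟪Au, Av⟫ ≥ -(δ_k / 2)(‖u‖² + ‖v‖²)`.
Summing the four cross terms yields `⟪Ax, Ay⟫ ≥ -δ_k ‖z‖²`. -/

open Matrix

lemma nsq_eq_dotProduct {ι : Type*} [Fintype ι] (x : ι → ℝ) : nsq x = x ⬝ᵥ x := by
  simp only [nsq, dotProduct, sq]

lemma nsq_add {ι : Type*} [Fintype ι] (u v : ι → ℝ) :
    nsq (u + v) = nsq u + 2 * (u ⬝ᵥ v) + nsq v := by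
  simp only [nsq_eq_dotProduct, add_dotProduct, dotProduct_add, dotProduct_comm v u]
  ring

lemma nsq_sub {ι : Type*} [Fintype ι] (u v : ι → ℝ) :
    nsq (u - v) = nsq u - 2 * (u ⬝ᵥ v) + nsq v := by
  simp only [nsq_eq_dotProduct, sub_dotProduct, dotProduct_sub, dotProduct_comm v u]
  ring

lemma nsq_add_of_dotProduct_eq_zero {ι : Type*} [Fintype ι] {u v : ι → ℝ} (huv : u ⬝ᵥ v = 0) :
    nsq (u + v) = nsq u + nsq v := by
  rw [nsq_add, huv, mul_zero, add_zero]

lemma nsq_sub_of_dotProduct_eq_zero {ι : Type*} [Fintype ι] {u v : ι → ℝ} (huv : u ⬝ᵥ v = 0) :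
    nsq (u - v) = nsq u + nsq v := by
  rw [nsq_sub, huv, mul_zero, sub_zero]

lemma sparse_of_card_le {n q : ℕ} {x : Fin n → ℝ} {U : Finset (Fin n)}
    (hx : ∀ i ∉ U, x i = 0) (hU : #U ≤ q) : Sparse q x := by
  refine le_trans (card_le_card fun i hi => ?_) hU
  by_contra hiU
  exact (mem_filter.mp hi).2 (hx i hiU)

section restr

variable {n : ℕ} (z : Fin n → ℝ) {U V : Finset (Fin n)}

lemma restr_supp : restr z (supp z) = z := by
  funext i
  by_cases hi : z i = 0 <;> simp [restr, supp, hi]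

lemma restr_union (hUV : Disjoint U V) : restr z (U ∪ V) = restr z U + restr z V := by
  funext i
  by_cases hU : i ∈ U
  · simp [restr, hU, disjoint_left.mp hUV hU]
  · by_cases hV : i ∈ V <;> simp [restr, hU, hV]

lemma restr_dotProduct_restr (hUV : Disjoint U V) : restr z U ⬝ᵥ restr z V = 0 := by
  refine sum_eq_zero fun i _ => ?_
  by_cases hU : i ∈ U
  · simp [restr, disjoint_left.mp hUV hU]
  · simp [restr, hU]

lemma nsq_restr_union (hUV : Disjoint U V) :
    nsq (restr z (U ∪ V)) = nsq (restr z U) + nsq (restr z V) := by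
  rw [restr_union z hUV, nsq_add_of_dotProduct_eq_zero (restr_dotProduct_restr z hUV)]

lemma sparse_restr {q : ℕ} (hU : #U ≤ q) : Sparse q (restr z U) :=
  sparse_of_card_le (fun _ hi => if_neg hi) hU

lemma sparse_restr_add_restr {q : ℕ} (hUV : #U + #V ≤ q) :
    Sparse q (restr z U + restr z V) ∧ Sparse q (restr z U - restr z V) := by
  have hcard : #(U ∪ V) ≤ q := (card_union_le U V).trans hUV
  have hzero : ∀ i ∉ U ∪ V, restr z U i = 0 ∧ restr z V i = 0 := fun i hi => by
    simp only [mem_union, not_or] at hi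
    exact ⟨if_neg hi.1, if_neg hi.2⟩
  exact ⟨sparse_of_card_le (fun i hi => by simp [(hzero i hi).1, (hzero i hi).2]) hcard,
    sparse_of_card_le (fun i hi => by simp [(hzero i hi).1, (hzero i hi).2]) hcard⟩

end restr

namespace SatRIP

variable {m n q : ℕ} {A : Matrix (Fin m) (Fin n) ℝ} {δ : ℝ}

/-- Polarization: `4⟪Au, Av⟫ = ‖A(u + v)‖² - ‖A(u - v)‖²` while `‖u ± v‖² = ‖u‖² + ‖v‖²`. -/
lemma neg_half_mul_le_dotProduct (hA : SatRIP A q δ) {u v : Fin n → ℝ}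
    (hadd : Sparse q (u + v)) (hsub : Sparse q (u - v)) (huv : u ⬝ᵥ v = 0) :
    -(δ / 2) * (nsq u + nsq v) ≤ A *ᵥ u ⬝ᵥ A *ᵥ v := by
  have hlow := (hA _ hadd).1
  have hup := (hA _ hsub).2
  rw [nsq_add_of_dotProduct_eq_zero huv, mulVec_add, nsq_add] at hlow
  rw [nsq_sub_of_dotProduct_eq_zero huv, mulVec_sub, nsq_sub] at hup
  linarith

lemma neg_half_mul_le_dotProduct_restr (hA : SatRIP A q δ) (z : Fin n → ℝ)
    {U V : Finset (Fin n)} (hUV : Disjoint U V) (hcard : #U + #V ≤ q) :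
    -(δ / 2) * (nsq (restr z U) + nsq (restr z V)) ≤ A *ᵥ restr z U ⬝ᵥ A *ᵥ restr z V :=
  hA.neg_half_mul_le_dotProduct (sparse_restr_add_restr z hcard).1
    (sparse_restr_add_restr z hcard).2 (restr_dotProduct_restr z hUV)

lemma neg_mul_le_dotProduct_restr_union (hA : SatRIP A q δ) (z : Fin n → ℝ)
    {S₁ S₂ T₁ T₂ : Finset (Fin n)} {a b : ℕ} (hab : a + b ≤ q)
    (hS : Disjoint S₁ S₂) (hT : Disjoint T₁ T₂) (hST : Disjoint (S₁ ∪ S₂) (T₁ ∪ T₂))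
    (hS₁ : #S₁ ≤ a) (hS₂ : #S₂ ≤ a) (hT₁ : #T₁ ≤ b) (hT₂ : #T₂ ≤ b) :
    -δ * (nsq (restr z (S₁ ∪ S₂)) + nsq (restr z (T₁ ∪ T₂))) ≤
      A *ᵥ restr z (S₁ ∪ S₂) ⬝ᵥ A *ᵥ restr z (T₁ ∪ T₂) := by
  have cross : ∀ {U V}, U ⊆ S₁ ∪ S₂ → V ⊆ T₁ ∪ T₂ → #U ≤ a → #V ≤ b →
      -(δ / 2) * (nsq (restr z U) + nsq (restr z V)) ≤ A *ᵥ restr z U ⬝ᵥ A *ᵥ restr z V :=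
    fun hU hV hUa hVb => hA.neg_half_mul_le_dotProduct_restr z
      (disjoint_of_subset_left hU (disjoint_of_subset_right hV hST)) (by omega)
  have c₁₁ := cross subset_union_left subset_union_left hS₁ hT₁
  have c₁₂ := cross subset_union_left subset_union_right hS₁ hT₂
  have c₂₁ := cross subset_union_right subset_union_left hS₂ hT₁
  have c₂₂ := cross subset_union_right subset_union_right hS₂ hT₂
  rw [nsq_restr_union z hS, nsq_restr_union z hT, restr_union z hS, restr_union z hT]
  simp only [mulVec_add, add_dotProduct, dotProduct_add]
  linarith

end SatRIP

lemma Finset.exists_subset_card_le_and_card_sdiff_le {α : Type*} [DecidableEq α]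
    (s : Finset α) {a b : ℕ} (h : #s ≤ a + b) : ∃ t ⊆ s, #t ≤ a ∧ #(s \ t) ≤ b := by
  obtain ⟨t, hts, htc⟩ := exists_subset_card_eq (s := s) (min_le_right a #s)
  refine ⟨t, hts, htc ▸ min_le_left _ _, ?_⟩
  rw [card_sdiff_of_subset hts, htc]
  omega

lemma Finset.exists_four_blocks {α : Type*} [DecidableEq α] (s : Finset α) {a b : ℕ}
    (h : #s ≤ 2 * a + 2 * b) : ∃ S₁ S₂ T₁ T₂ : Finset α, S₁ ∪ S₂ ∪ (T₁ ∪ T₂) = s ∧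
      Disjoint S₁ S₂ ∧ Disjoint T₁ T₂ ∧ Disjoint (S₁ ∪ S₂) (T₁ ∪ T₂) ∧
      #S₁ ≤ a ∧ #S₂ ≤ a ∧ #T₁ ≤ b ∧ #T₂ ≤ b := by
  obtain ⟨S, hS, hSc, hTc⟩ := s.exists_subset_card_le_and_card_sdiff_le (a := 2 * a) (by omega)
  obtain ⟨S₁, hS₁, hS₁c, hS₂c⟩ := S.exists_subset_card_le_and_card_sdiff_le (a := a) (b := a)
    (by omega)
  obtain ⟨T₁, hT₁, hT₁c, hT₂c⟩ := (s \ S).exists_subset_card_le_and_card_sdiff_le (a := b)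
    (b := b) (by omega)
  refine ⟨S₁, S \ S₁, T₁, (s \ S) \ T₁, ?_, disjoint_sdiff, disjoint_sdiff, ?_,
    hS₁c, hS₂c, hT₁c, hT₂c⟩
  · rw [union_sdiff_of_subset hS₁, union_sdiff_of_subset hT₁, union_sdiff_of_subset hS]
  · rw [union_sdiff_of_subset hS₁, union_sdiff_of_subset hT₁]
    exact disjoint_sdiff

theorem SatRIP.lower_bound_of_sparse {m n a b : ℕ} {A : Matrix (Fin m) (Fin n) ℝ} {δ δ' : ℝ}
    (hba : b ≤ a) (hA : SatRIP A (a + b) δ) (hA' : SatRIP A (2 * a) δ') {z : Fin n → ℝ}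
    (hz : Sparse (2 * a + 2 * b) z) : (1 - δ' - 2 * δ) * nsq z ≤ nsq (A *ᵥ z) := by
  obtain ⟨S₁, S₂, T₁, T₂, hcover, hS, hT, hST, hS₁, hS₂, hT₁, hT₂⟩ :=
    (supp z).exists_four_blocks hz
  have hx := hA' _ (sparse_restr z ((card_union_le S₁ S₂).trans (by omega)))
  have hy := hA' _ (sparse_restr z ((card_union_le T₁ T₂).trans (by omega)))
  have hcross := hA.neg_mul_le_dotProduct_restr_union z le_rfl hS hT hST hS₁ hS₂ hT₁ hT₂
  have hsplit := restr_union z hST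
  rw [hcover, restr_supp] at hsplit
  rw [hsplit, nsq_add_of_dotProduct_eq_zero (restr_dotProduct_restr z hST), mulVec_add, nsq_add]
  linarith [hx.1, hy.1]

theorem stmt3_general {m n : ℕ} (A : Matrix (Fin m) (Fin n) ℝ)
    (k : ℕ) (hko : Odd k)
    (δk δk1 : ℝ) (hδk : IsRIC A k δk) (hδk1 : IsRIC A (k + 1) δk1) :
    ∀ z : Fin n → ℝ, Sparse (2 * k) z →
      (1 - δk1 - 2 * δk) * nsq z ≤ nsq (A.mulVec z) := by
  obtain ⟨r, rfl⟩ := hko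
  intro z hz
  have hsat : SatRIP A ((r + 1) + r) δk := (show 2 * r + 1 = r + 1 + r by omega) ▸ hδk.1.2
  have hsat' : SatRIP A (2 * (r + 1)) δk1 :=
    (show 2 * r + 1 + 1 = 2 * (r + 1) by omega) ▸ hδk1.1.2
  exact hsat.lower_bound_of_sparse (Nat.le_succ r) hsat'
    ((show 2 * (2 * r + 1) = 2 * (r + 1) + 2 * r by omega) ▸ hz)

theorem stmt3 {m n : ℕ} (A : Matrix (Fin m) (Fin n) ℝ)
    (k : ℕ) (hk : 0 < k) (hko : Odd k)
    (δk δk1 : ℝ) (hδk : IsRIC A k δk) (hδk1 : IsRIC A (k + 1) δk1) :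
    ∀ z : Fin n → ℝ, Sparse (2 * k) z →
      (1 - δk1 - 2 * δk) * nsq z ≤ nsq (A.mulVec z) :=
  stmt3_general A k hko δk δk1 hδk hδk1
end

section
/- Let z ∈ ℝⁿ be any vector and h ∈ ℝⁿ any k-sparse vector. Let z* be any k-sparse vector minimizing ‖z − d‖₂ over all k-sparse vectors d ∈ ℝⁿ (i.e., z* is a hard thresholding H_k(z) of z). Set S = supp(h) and S* = supp(z*). Then ‖h − z*‖₂ ≤ ‖(z − h)_{S*∪S}‖₂ + ‖(z − h)_{S*∖S}‖₂. -/
open Finset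

/-!
Optimality of `z*` forces `z* = z_{S*}`, and then `‖z - z*‖² = ‖z‖² - ‖z_{S*}‖²`; comparing with the
`k`-sparse competitor `z_S` gives `‖z_S‖ ≤ ‖z_{S*}‖`, hence `‖z_{S∖S*}‖ ≤ ‖z_{S*∖S}‖ = ‖(z - h)_{S*∖S}‖`.
The claim follows from the triangle inequality applied to `h - z* = z_{S∖S*} - (z - h)_{S*∪S}`.
-/

section Norm

variable {ι : Type*} [Fintype ι]

lemma n2_eq_norm_toLp (x : ι → ℝ) : n2 x = ‖WithLp.toLp 2 x‖ := by
  simp only [n2, nsq, EuclideanSpace.norm_eq, Real.norm_eq_abs, sq_abs]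

lemma n2_sub_le (x y : ι → ℝ) : n2 (x - y) ≤ n2 x + n2 y := by
  simpa only [n2_eq_norm_toLp, WithLp.toLp_sub] using norm_sub_le _ _

lemma nsq_nonneg (x : ι → ℝ) : 0 ≤ nsq x :=
  sum_nonneg fun i _ => sq_nonneg (x i)

lemma n2_le_n2_iff {x y : ι → ℝ} : n2 x ≤ n2 y ↔ nsq x ≤ nsq y :=
  Real.sqrt_le_sqrt_iff (nsq_nonneg y)

end Norm

section Restrict

variable {n : ℕ}

lemma apply_eq_zero_of_notMem_supp {x : Fin n → ℝ} {i : Fin n} (hi : i ∉ supp x) : x i = 0 := by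
  simpa [supp] using hi

lemma supp_restr_subset (x : Fin n → ℝ) (T : Finset (Fin n)) : supp (restr x T) ⊆ T := by
  intro i hi
  by_contra hiT
  simp [supp, restr, hiT] at hi

lemma nsq_restr (x : Fin n → ℝ) (T : Finset (Fin n)) : nsq (restr x T) = ∑ i ∈ T, x i ^ 2 := by
  simp [nsq, restr, apply_ite (· ^ 2), sum_ite_mem]

lemma nsq_sub_restr_self (z : Fin n → ℝ) (T : Finset (Fin n)) :
    nsq (z - restr z T) = nsq z - ∑ i ∈ T, z i ^ 2 := by
  rw [← nsq_restr, eq_sub_iff_add_eq, nsq, nsq, nsq, ← sum_add_distrib]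
  refine sum_congr rfl fun i _ => ?_
  by_cases hi : i ∈ T <;> simp [restr, hi]

lemma nsq_sub_eq_of_supp_subset {z d : Fin n → ℝ} {T : Finset (Fin n)} (hd : supp d ⊆ T) :
    nsq (z - d) = nsq (z - restr z T) + nsq (restr (z - d) T) := by
  rw [nsq, nsq, nsq, ← sum_add_distrib]
  refine sum_congr rfl fun i _ => ?_
  by_cases hi : i ∈ T
  · simp [restr, hi]
  · simp [restr, hi, apply_eq_zero_of_notMem_supp fun h => hi (hd h)]

lemma eq_zero_of_nsq_nonpos {x : Fin n → ℝ} (hx : nsq x ≤ 0) : x = 0 := by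
  have hsq := (sum_eq_zero_iff_of_nonneg fun i _ => sq_nonneg (x i)).mp
    (le_antisymm hx (nsq_nonneg x))
  exact funext fun i => pow_eq_zero_iff two_ne_zero |>.mp (hsq i (mem_univ i))

lemma sub_restr_eq (z h : Fin n → ℝ) (T : Finset (Fin n)) :
    h - restr z T = restr z (supp h \ T) - restr (z - h) (T ∪ supp h) := by
  funext i
  by_cases hT : i ∈ T
  · simp [restr, hT]
  · by_cases hh : i ∈ supp h
    · simp [restr, hT, hh]
    · simp [restr, hT, hh, apply_eq_zero_of_notMem_supp hh]

end Restrict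

namespace IsHT

variable {n k : ℕ} {z zs : Fin n → ℝ}

lemma eq_restr_supp (hzs : IsHT k z zs) : zs = restr z (supp zs) := by
  have hcomp : Sparse k (restr z (supp zs)) :=
    (card_le_card (supp_restr_subset z _)).trans hzs.1
  have hopt := n2_le_n2_iff.mp (hzs.2 _ hcomp)
  rw [nsq_sub_eq_of_supp_subset (subset_refl (supp zs))] at hopt
  have hzero := congrFun (eq_zero_of_nsq_nonpos (by linarith))
  funext i
  by_cases hi : i ∈ supp zs
  · simpa [restr, hi, sub_eq_zero, eq_comm] using hzero i
  · simp [restr, hi, apply_eq_zero_of_notMem_supp hi]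

lemma sum_sq_le (hzs : IsHT k z zs) {T : Finset (Fin n)} (hT : T.card ≤ k) :
    ∑ i ∈ T, z i ^ 2 ≤ ∑ i ∈ supp zs, z i ^ 2 := by
  have hcomp : Sparse k (restr z T) := (card_le_card (supp_restr_subset z T)).trans hT
  have hopt := n2_le_n2_iff.mp (hzs.2 _ hcomp)
  rw [hzs.eq_restr_supp, nsq_sub_restr_self, nsq_sub_restr_self] at hopt
  linarith

end IsHT

theorem stmt5 {n : ℕ} (k : ℕ) (z h zs : Fin n → ℝ)
    (hh : Sparse k h) (hzs : IsHT k z zs) :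
    n2 (h - zs) ≤ n2 (restr (z - h) (supp zs ∪ supp h))
      + n2 (restr (z - h) (supp zs \ supp h)) := by
  have henergy : ∑ i ∈ supp h \ supp zs, z i ^ 2 ≤ ∑ i ∈ supp zs \ supp h, z i ^ 2 := by
    have := hzs.sum_sq_le hh
    linarith [sum_sdiff_sub_sum_sdiff (s₁ := supp h) (s₂ := supp zs) (f := fun i => z i ^ 2)]
  have htail : n2 (restr z (supp h \ supp zs)) ≤ n2 (restr (z - h) (supp zs \ supp h)) := by
    rw [n2_le_n2_iff, nsq_restr, nsq_restr]
    refine henergy.trans_eq (sum_congr rfl fun i hi => ?_)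
    simp [apply_eq_zero_of_notMem_supp (mem_sdiff.mp hi).2]
  calc n2 (h - zs)
      = n2 (restr z (supp h \ supp zs) - restr (z - h) (supp zs ∪ supp h)) := by
        rw [← sub_restr_eq, ← hzs.eq_restr_supp]
    _ ≤ n2 (restr z (supp h \ supp zs)) + n2 (restr (z - h) (supp zs ∪ supp h)) := n2_sub_le _ _
    _ ≤ _ := by linarith
end
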